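/- arXiv:1304.1075 — 7 statements merged into one kernel-verified Lean document; each statement's English description precedes it below -/
import Mathlib

section
/- A set system F containing ∅ and N is an augmenting system (weakly union-closed and satisfying the augmentation property between nested feasible sets) if and only if F is a regular set system and weakly union-closed. -/
/-!
Both augmentation and regularity are equivalent to every covering step `S ⋖ T` of `F` adding
exactly one element. Under augmentation a cover `S ⋖ T` contains some feasible `insert i S`,
which must then be `T`. Conversely, in a regular system one can extend a cover `S ⋖ T` to a
maximal chain `∅ ⋖ ⋯ ⋖ S ⋖ T ⋖ ⋯ ⋖ N`; since each step adds at least one element, its length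
`n` forces `|T| = |S| + 1`, and a minimal feasible set strictly between `S` and a larger `T`
then supplies the augmenting element.
-/

open Finset

variable {α : Type*}

/-- `T` covers `S` in the set system `F`. -/
def Covers [Fintype α] [DecidableEq α] (F : Finset (Finset α)) (S T : Finset α) : Prop :=
  S ∈ F ∧ T ∈ F ∧ S ⊂ T ∧ ∀ U ∈ F, S ⊂ U → ¬ U ⊂ T

/-- A maximal chain of length `k` from `A` to `B` in the set system `F`:
each step is a covering step in `F`. -/
def IsMaxChainIn [Fintype α] [DecidableEq α] (F : Finset (Finset α)) (A B : Finset α) (k : ℕ)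
    (c : Fin (k + 1) → Finset α) : Prop :=
  c 0 = A ∧ c (Fin.last k) = B ∧ ∀ i : Fin k, Covers F (c i.castSucc) (c i.succ)

/-- A set system is regular if all maximal chains from `∅` to `N` have length `n`. -/
def RegularSystem [Fintype α] [DecidableEq α] (F : Finset (Finset α)) : Prop :=
  ∀ (k : ℕ) (c : Fin (k + 1) → Finset α),
    IsMaxChainIn F ∅ Finset.univ k c → k = Fintype.card α

def HasAugmentation [DecidableEq α] (F : Finset (Finset α)) : Prop :=
  ∀ S ∈ F, ∀ T ∈ F, S ⊂ T → ∃ i ∈ T \ S, insert i S ∈ F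

def HasMaxChain [Fintype α] [DecidableEq α] (F : Finset (Finset α)) (A B : Finset α) (k : ℕ) :
    Prop :=
  ∃ c : Fin (k + 1) → Finset α, IsMaxChainIn F A B k c

section MaxChain

variable [Fintype α] [DecidableEq α] {F : Finset (Finset α)}

theorem hasMaxChain_refl (A : Finset α) : HasMaxChain F A A 0 :=
  ⟨fun _ => A, rfl, rfl, fun i => i.elim0⟩

theorem HasMaxChain.cons {A B C : Finset α} {k : ℕ} (hAB : Covers F A B)
    (hBC : HasMaxChain F B C k) : HasMaxChain F A C (k + 1) := by
  obtain ⟨c, hc0, hcl, hc⟩ := hBC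
  refine ⟨Fin.cons A c, Fin.cons_zero _ _, ?_, fun i => ?_⟩
  · rw [← Fin.succ_last, Fin.cons_succ, hcl]
  · induction i using Fin.cases with
    | zero => simpa [hc0] using hAB
    | succ j => simpa only [← Fin.succ_castSucc, Fin.cons_succ] using hc j

theorem HasMaxChain.exists_covers {A C : Finset α} {k : ℕ} (h : HasMaxChain F A C (k + 1)) :
    ∃ B, Covers F A B ∧ HasMaxChain F B C k := by
  obtain ⟨c, hc0, hcl, hc⟩ := h
  refine ⟨c 1, hc0 ▸ hc 0, Fin.tail c, rfl, ?_, fun i => ?_⟩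
  · rw [Fin.tail, Fin.succ_last, hcl]
  · simpa only [Fin.tail, Fin.succ_castSucc] using hc i.succ

theorem HasMaxChain.trans {A B C : Finset α} {k l : ℕ} (hAB : HasMaxChain F A B k)
    (hBC : HasMaxChain F B C l) : HasMaxChain F A C (k + l) := by
  induction k generalizing A with
  | zero =>
    obtain ⟨c, hc0, hcl, -⟩ := hAB
    rw [Fin.last_zero, hc0] at hcl
    rwa [hcl, zero_add]
  | succ k ih =>
    obtain ⟨A', hAA', hA'B⟩ := hAB.exists_covers
    rw [Nat.succ_add]
    exact (ih hA'B).cons hAA'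

theorem exists_covers_of_ssubset {S T : Finset α} (hS : S ∈ F) (hT : T ∈ F) (hST : S ⊂ T) :
    ∃ U, Covers F S U ∧ U ⊆ T := by
  obtain ⟨U, ⟨hU, hSU, hUT⟩, hmin⟩ :=
    exists_minimal_of_wellFoundedLT (fun U => U ∈ F ∧ S ⊂ U ∧ U ⊆ T) ⟨T, hT, hST, le_rfl⟩
  refine ⟨U, ⟨hS, hU, hSU, fun W hW hSW hWU => ?_⟩, hUT⟩
  exact hWU.not_ge (hmin ⟨hW, hSW, hWU.subset.trans hUT⟩ hWU.le)

theorem exists_hasMaxChain {A B : Finset α} (hA : A ∈ F) (hB : B ∈ F) (hAB : A ⊆ B) :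
    ∃ k, k + #A ≤ #B ∧ HasMaxChain F A B k := by
  obtain rfl | hAB := hAB.eq_or_ssubset
  · exact ⟨0, by simp, hasMaxChain_refl A⟩
  obtain ⟨U, hAU, hUB⟩ := exists_covers_of_ssubset hA hB hAB
  have hAU_card := card_lt_card hAU.2.2.1
  have hUB_card := card_le_card hUB
  obtain ⟨k, hk, hUBk⟩ := exists_hasMaxChain hAU.2.1 hB hUB
  exact ⟨k + 1, by omega, hUBk.cons hAU⟩
termination_by #B - #A
decreasing_by omega

theorem Covers.card_eq_of_hasAugmentation (haug : HasAugmentation F) {S T : Finset α}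
    (h : Covers F S T) : #T = #S + 1 := by
  obtain ⟨hS, hT, hST, hmax⟩ := h
  obtain ⟨i, hi, hiS⟩ := haug S hS T hT hST
  rw [mem_sdiff] at hi
  have hiST : insert i S ⊆ T := insert_subset hi.1 hST.subset
  have hiS_eq : insert i S = T :=
    by_contra fun hne => hmax _ hiS (ssubset_insert hi.2) (hiST.ssubset_of_ne hne)
  rw [← hiS_eq, card_insert_of_notMem hi.2]

theorem HasMaxChain.card_eq_of_hasAugmentation (haug : HasAugmentation F) {A B : Finset α}
    {k : ℕ} (h : HasMaxChain F A B k) : #B = #A + k := by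
  induction k generalizing A with
  | zero =>
    obtain ⟨c, hc0, hcl, -⟩ := h
    rw [← hcl, Fin.last_zero, hc0, add_zero]
  | succ k ih =>
    obtain ⟨A', hAA', hA'B⟩ := h.exists_covers
    rw [ih hA'B, hAA'.card_eq_of_hasAugmentation haug]
    omega

theorem regularSystem_of_hasAugmentation (haug : HasAugmentation F) : RegularSystem F :=
  fun k c hc => by
    simpa using (HasMaxChain.card_eq_of_hasAugmentation haug ⟨c, hc⟩).symm

theorem Covers.card_eq_of_regularSystem (hreg : RegularSystem F) (hempty : ∅ ∈ F)
    (huniv : univ ∈ F) {S T : Finset α} (h : Covers F S T) : #T = #S + 1 := by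
  obtain ⟨m, hm, hS⟩ := exists_hasMaxChain hempty h.1 (empty_subset S)
  obtain ⟨p, hp, hT⟩ := exists_hasMaxChain h.2.1 huniv (subset_univ T)
  obtain ⟨c, hc⟩ := (hS.trans (hT.cons h)).trans (hasMaxChain_refl univ)
  have hlen := hreg _ c hc
  have hST := card_lt_card h.2.2.1
  simp only [card_empty, card_univ] at hm hp hlen
  omega

theorem hasAugmentation_of_regularSystem (hreg : RegularSystem F) (hempty : ∅ ∈ F)
    (huniv : univ ∈ F) : HasAugmentation F := by
  intro S hS T hT hST
  obtain ⟨U, hSU, hUT⟩ := exists_covers_of_ssubset hS hT hST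
  obtain ⟨i, hiS, rfl⟩ := exists_eq_insert_iff.mpr
    ⟨hSU.2.2.1.subset, (hSU.card_eq_of_regularSystem hreg hempty huniv).symm⟩
  exact ⟨i, mem_sdiff.mpr ⟨hUT (mem_insert_self i S), hiS⟩, hSU.2.1⟩

end MaxChain

/-- `F` is an augmenting system containing `N` iff it is regular and weakly union-closed. -/
theorem augmentingSystem_iff_regular_weaklyUnionClosed
    [Fintype α] [DecidableEq α] (F : Finset (Finset α))
    (hempty : ∅ ∈ F) (huniv : Finset.univ ∈ F) :
    ((∀ A ∈ F, ∀ B ∈ F, (A ∩ B).Nonempty → A ∪ B ∈ F) ∧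
      (∀ S ∈ F, ∀ T ∈ F, S ⊂ T → ∃ i ∈ T \ S, insert i S ∈ F)) ↔
    (RegularSystem F ∧ (∀ A ∈ F, ∀ B ∈ F, (A ∩ B).Nonempty → A ∪ B ∈ F)) :=
  ⟨fun ⟨hunion, haug⟩ => ⟨regularSystem_of_hasAugmentation haug, hunion⟩,
    fun ⟨hreg, hunion⟩ => ⟨hunion, hasAugmentation_of_regularSystem hreg hempty huniv⟩⟩
end

section
/- Let F be a set system on N. The cone core(F) = {x ∈ ℝ^N : x(S) ≥ 0 for all S ∈ F, x(N) = 0} is a linear subspace of ℝ^N if and only if F is balanced, i.e., there exist positive coefficients λ_S > 0 for S ∈ F \ {∅} with Σ_S λ_S 1_S = 1_N. -/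
open Finset

/-- Characteristic vector of a finset. -/
def indic {α : Type*} [DecidableEq α] (T : Finset α) : α → ℝ :=
  fun i => if i ∈ T then 1 else 0

/-- The recession cone of the core of a set system. -/
def coreCone {α : Type*} [Fintype α] (F : Finset (Finset α)) : Set (α → ℝ) :=
  {x | (∀ S ∈ F, 0 ≤ ∑ i ∈ S, x i) ∧ ∑ i, x i = 0}

/-!
If `F` is balanced with weights `λ`, then for `x ∈ core(F)` the nonnegative numbers
`λ_S x(S)` add up to `x(N) = 0`, so `core(F) = {x | x(S) = 0 for all S ∈ F}`, a subspace.
Conversely, if `core(F)` is a subspace then `x(S) ≥ 0` on it forces `x(S) = 0`, i.e. the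
subspace `L = {(x(S))_S : x(N) = 0}` meets the nonnegative orthant only in `0`. Separating `L`
from the standard simplex (Stiemke's lemma) gives weights `c > 0` orthogonal to `L`; then
`∑ c_S 1_S` is orthogonal to the hyperplane `x(N) = 0`, hence a positive multiple of `1_N`.
-/

open Matrix

theorem Submodule.exists_pos_dotProduct_eq_zero {ι : Type*} [Fintype ι]
    (L : Submodule ℝ (ι → ℝ)) (hL : ∀ l ∈ L, 0 ≤ l → l = 0) :
    ∃ c : ι → ℝ, (∀ i, 0 < c i) ∧ ∀ l ∈ L, c ⬝ᵥ l = 0 := by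
  classical
  have hdisj : Disjoint (stdSimplex ℝ ι) (L : Set (ι → ℝ)) := by
    refine Set.disjoint_left.mpr fun l hΔ hlL => ?_
    simpa [hL l hlL hΔ.1] using hΔ.2
  obtain ⟨f, u, v, hfΔ, huv, hfL⟩ := geometric_hahn_banach_compact_closed
    (convex_stdSimplex ℝ ι) (isCompact_stdSimplex ℝ ι) L.convex
    L.closed_of_finiteDimensional hdisj
  have hv : v < 0 := by simpa using hfL 0 L.zero_mem
  have hfL0 : ∀ l ∈ L, f l = 0 := by
    intro l hl
    by_contra hne
    have := hfL _ (L.smul_mem (v / f l) hl)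
    rw [map_smul, smul_eq_mul, div_mul_cancel₀ _ hne] at this
    exact lt_irrefl _ this
  refine ⟨fun i => -f (if i = · then 1 else 0), fun i => ?_, fun l hl => ?_⟩
  · linarith [hfΔ _ (ite_eq_mem_stdSimplex ℝ i)]
  · have hf := f.toLinearMap.pi_apply_eq_sum_univ l
    simp only [ContinuousLinearMap.coe_coe, hfL0 l hl, smul_eq_mul] at hf
    rw [dotProduct_comm]
    simp only [dotProduct, mul_neg, sum_neg_distrib, ← hf, neg_zero]

lemma sum_eq_zero_of_neg_mem_coreCone {α : Type*} [Fintype α] {F : Finset (Finset α)}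
    {x : α → ℝ} (hx : x ∈ coreCone F) (hnx : -x ∈ coreCone F) {S : Finset α} (hS : S ∈ F) :
    ∑ i ∈ S, x i = 0 := by
  have := hnx.1 S hS
  simp only [Pi.neg_apply, sum_neg_distrib, neg_nonneg] at this
  exact this.antisymm (hx.1 S hS)

section

variable {α : Type*} [DecidableEq α]

lemma indic_nonneg (T : Finset α) (i : α) : 0 ≤ indic T i := by
  unfold indic; positivity

lemma indic_empty : indic (∅ : Finset α) = 0 := by
  funext i; simp [indic]

lemma sum_filter_ne_empty_smul_indic (F : Finset (Finset α)) (c : Finset α → ℝ) :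
    ∑ S ∈ F.filter (· ≠ ∅), c S • indic S = ∑ S ∈ F, c S • indic S :=
  sum_filter_of_ne fun S _ h hS => h (by rw [hS, indic_empty, smul_zero])

variable [Fintype α]

lemma indic_dotProduct (S : Finset α) (x : α → ℝ) : indic S ⬝ᵥ x = ∑ i ∈ S, x i := by
  simp [indic, dotProduct, ite_mul]

lemma eq_of_forall_sum_eq_zero_dotProduct_eq_zero {w : α → ℝ}
    (hw : ∀ x : α → ℝ, ∑ i, x i = 0 → w ⬝ᵥ x = 0) (i j : α) : w i = w j := by
  have := hw (Pi.single i 1 - Pi.single j 1) (by simp [sum_sub_distrib])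
  rw [dotProduct_sub, dotProduct_single, dotProduct_single] at this
  linarith

def incidence (F : Finset (Finset α)) : Matrix (Finset α) α ℝ :=
  fun S => if S ∈ F then indic S else 0

lemma incidence_mulVec_apply (F : Finset (Finset α)) (x : α → ℝ) (S : Finset α) :
    (incidence F *ᵥ x) S = if S ∈ F then ∑ i ∈ S, x i else 0 := by
  by_cases hS : S ∈ F <;> simp [incidence, mulVec, hS, indic_dotProduct]

lemma incidence_mulVec_eq_zero_iff {F : Finset (Finset α)} {x : α → ℝ} :
    incidence F *ᵥ x = 0 ↔ ∀ S ∈ F, ∑ i ∈ S, x i = 0 := by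
  simp [funext_iff, incidence_mulVec_apply]

lemma vecMul_incidence (F : Finset (Finset α)) (c : Finset α → ℝ) :
    c ᵥ* incidence F = ∑ S ∈ F, c S • indic S := by
  ext i
  simp [vecMul, dotProduct, incidence, Finset.sum_apply, apply_ite (fun v : α → ℝ => v i)]

def IsBalanced (F : Finset (Finset α)) : Prop :=
  ∃ lam : Finset α → ℝ, (∀ S ∈ F, S ≠ ∅ → 0 < lam S) ∧
    ∑ S ∈ F.filter (· ≠ ∅), lam S • indic S = indic (Finset.univ : Finset α)

lemma IsBalanced.of_sum_smul_indic_eq {F : Finset (Finset α)} {c : Finset α → ℝ} {k : ℝ}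
    (hc : ∀ S ∈ F, S ≠ ∅ → 0 < c S) (hk : 0 < k)
    (hsum : ∑ S ∈ F, c S • indic S = k • indic Finset.univ) : IsBalanced F := by
  refine ⟨fun S => c S / k, fun S hS hSne => div_pos (hc S hS hSne) hk, ?_⟩
  simp only [sum_filter_ne_empty_smul_indic, div_eq_inv_mul, mul_smul, ← smul_sum, hsum,
    inv_smul_smul₀ hk.ne']

theorem IsBalanced.coreCone_eq_ker {F : Finset (Finset α)} (hF : IsBalanced F)
    (huniv : Finset.univ ∈ F) :
    coreCone F = LinearMap.ker (incidence F).mulVecLin := by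
  obtain ⟨lam, hpos, hsum⟩ := hF
  ext x
  simp only [SetLike.mem_coe, LinearMap.mem_ker, mulVecLin_apply, incidence_mulVec_eq_zero_iff]
  refine ⟨fun ⟨hnonneg, htotal⟩ S hS => ?_, fun h => ⟨fun S hS => (h S hS).ge, h _ huniv⟩⟩
  rcases eq_or_ne S ∅ with rfl | hSne
  · exact sum_empty
  have hzero : ∑ T ∈ F.filter (· ≠ ∅), lam T * ∑ i ∈ T, x i = 0 := by
    have := congrArg (· ⬝ᵥ x) hsum
    simp only [sum_dotProduct, smul_dotProduct, indic_dotProduct, smul_eq_mul] at this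
    rw [this, htotal]
  have hterm := (sum_eq_zero_iff_of_nonneg fun T hT =>
    mul_nonneg (hpos T (mem_filter.mp hT).1 (mem_filter.mp hT).2).le
      (hnonneg T (mem_filter.mp hT).1)).mp hzero S (mem_filter.mpr ⟨hS, hSne⟩)
  exact (mul_eq_zero.mp hterm).resolve_left (hpos S hS hSne).ne'

lemma exists_pos_vecMul_incidence_dotProduct_eq_zero {F : Finset (Finset α)}
    (huniv : Finset.univ ∈ F) (hsymm : ∀ x ∈ coreCone F, -x ∈ coreCone F) :
    ∃ c : Finset α → ℝ, (∀ S, 0 < c S) ∧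
      ∀ x : α → ℝ, ∑ i, x i = 0 → (c ᵥ* incidence F) ⬝ᵥ x = 0 := by
  -- the row `univ` of the incidence matrix reads off `x(N)`, so `L = {(x(S))_S : x(N) = 0}`
  set L := LinearMap.ker (LinearMap.proj (R := ℝ) (φ := fun _ : Finset α => ℝ) Finset.univ) ⊓
    LinearMap.range (incidence F).mulVecLin
  obtain ⟨c, hc, hcL⟩ := L.exists_pos_dotProduct_eq_zero <| by
    rintro l ⟨hl, x, rfl⟩ hnonneg
    have hx : x ∈ coreCone F := by
      refine ⟨fun S hS => ?_, ?_⟩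
      · simpa [incidence_mulVec_apply, hS] using hnonneg S
      · simpa [incidence_mulVec_apply, huniv] using hl
    exact incidence_mulVec_eq_zero_iff.mpr fun S =>
      sum_eq_zero_of_neg_mem_coreCone hx (hsymm x hx)
  refine ⟨c, hc, fun x hx => ?_⟩
  rw [← dotProduct_mulVec]
  refine hcL _ ⟨?_, x, rfl⟩
  simp [incidence_mulVec_apply, huniv, hx]

theorem isBalanced_of_forall_neg_mem_coreCone {F : Finset (Finset α)}
    (huniv : Finset.univ ∈ F) (hsymm : ∀ x ∈ coreCone F, -x ∈ coreCone F) : IsBalanced F := by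
  obtain ⟨c, hc, hw⟩ := exists_pos_vecMul_incidence_dotProduct_eq_zero huniv hsymm
  rcases isEmpty_or_nonempty α with hα | ⟨⟨i₀⟩⟩
  · exact ⟨1, fun _ _ _ => one_pos, Subsingleton.elim _ _⟩
  have hconst := eq_of_forall_sum_eq_zero_dotProduct_eq_zero hw
  refine IsBalanced.of_sum_smul_indic_eq (fun S _ _ => hc S) (k := (c ᵥ* incidence F) i₀) ?_ ?_
  · have hle : c univ * indic univ i₀ ≤ (c ᵥ* incidence F) i₀ := by
      simp only [vecMul_incidence, Finset.sum_apply, Pi.smul_apply, smul_eq_mul]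
      exact single_le_sum (f := fun S => c S * indic S i₀)
        (fun S _ => mul_nonneg (hc S).le (indic_nonneg S i₀)) huniv
    simp only [indic, mem_univ, if_true, mul_one] at hle
    exact (hc univ).trans_le hle
  · rw [← vecMul_incidence]
    ext i
    simpa [indic] using hconst i i₀

end

theorem coreCone_subspace_iff_balanced_general
    {α : Type*} [Fintype α] [DecidableEq α] (F : Finset (Finset α))
    (huniv : Finset.univ ∈ F) :
    (∃ U : Submodule ℝ (α → ℝ), (U : Set (α → ℝ)) = coreCone F) ↔
      ∃ lam : Finset α → ℝ, (∀ S ∈ F, S ≠ ∅ → 0 < lam S) ∧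
        ∑ S ∈ F.filter (· ≠ ∅), lam S • indic S = indic (Finset.univ : Finset α) := by
  constructor
  · rintro ⟨U, hU⟩
    refine isBalanced_of_forall_neg_mem_coreCone huniv fun x hx => ?_
    rw [← hU] at hx ⊢
    exact U.neg_mem hx
  · intro hF
    exact ⟨_, (IsBalanced.coreCone_eq_ker hF huniv).symm⟩

/-- `core(F)` is a linear subspace iff `F` is balanced. -/
theorem coreCone_subspace_iff_balanced
    {α : Type*} [Fintype α] [DecidableEq α] (F : Finset (Finset α))
    (hempty : ∅ ∈ F) (huniv : Finset.univ ∈ F) :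
    (∃ U : Submodule ℝ (α → ℝ), (U : Set (α → ℝ)) = coreCone F) ↔
      ∃ lam : Finset α → ℝ, (∀ S ∈ F, S ≠ ∅ → 0 < lam S) ∧
        ∑ S ∈ F.filter (· ≠ ∅), lam S • indic S = indic (Finset.univ : Finset α) :=
  coreCone_subspace_iff_balanced_general F huniv
end

section
/- Let F = O(N, ≤) be the set system of downsets of a poset on N. If the poset (N, ≤) is connected (its comparability/Hasse graph is connected), then every game v on F has nonempty core. Conversely, if (N, ≤) is not connected, there exists a game on F with empty core. -/
/-
Let `w i` be the number of elements above `i` minus the number below it. For a downset `S`, the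
pairs `i < j` inside `S` cancel in `∑ i ∈ S, w i`, and no pair `j < i` leaves `S`, so this sum counts
the pairs `i < j` with `i ∈ S`, `j ∉ S`. It vanishes for `S = N`, and if the poset is connected it is
at least `1` for every other nonempty downset, since a walk out of `S` along comparabilities must
cross it upwards. Hence `x = M • w + v(N)/|N|` lies in the core once `M` is large. If the poset is
not connected, a component `A` and its complement are both nonempty downsets, and the game equal to
`1` on every nonempty downset asks for `x(A) ≥ 1`, `x(Aᶜ) ≥ 1` and `x(A) + x(Aᶜ) = 1`.
-/

open Finset

/-- The comparability graph of a poset. -/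
def compGraph (α : Type*) [PartialOrder α] : SimpleGraph α where
  Adj i j := i ≠ j ∧ (i ≤ j ∨ j ≤ i)
  symm := ⟨fun _ _ h => ⟨Ne.symm h.1, h.2.symm⟩⟩
  loopless := ⟨fun _ h => h.1 rfl⟩

/-- `S` is a downset of the poset. -/
def IsDownset {α : Type*} [PartialOrder α] (S : Finset α) : Prop :=
  ∀ i ∈ S, ∀ j, j ≤ i → j ∈ S

section Games

variable {α : Type*} [PartialOrder α]

def gameCore [Fintype α] (v : Finset α → ℝ) : Set (α → ℝ) :=
  {x | (∀ S : Finset α, IsDownset S → v S ≤ ∑ i ∈ S, x i) ∧ ∑ i, x i = v univ}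

lemma IsDownset.exists_lt_of_reachable {S : Finset α} (hS : IsDownset S) {i j : α}
    (hij : (compGraph α).Reachable i j) (hi : i ∈ S) (hj : j ∉ S) :
    ∃ a ∈ S, ∃ b ∉ S, a < b := by
  obtain ⟨p⟩ := hij
  induction p with
  | nil => exact absurd hi hj
  | @cons u v w huv _ ih =>
    by_cases hv : v ∈ S
    · exact ih hv hj
    · rcases huv with ⟨hne, huv | hvu⟩
      · exact ⟨u, hi, v, hv, lt_of_le_of_ne huv hne⟩
      · exact absurd (hS u hi v hvu) hv

lemma isDownset_filter_of_adj [Fintype α] {p : α → Prop} [DecidablePred p]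
    (hp : ∀ a b, (compGraph α).Adj a b → p a → p b) : IsDownset (univ.filter p) := by
  intro k hk l hlk
  rw [mem_filter] at hk ⊢
  rcases eq_or_ne k l with rfl | hne
  · exact hk
  · exact ⟨mem_univ l, hp k l ⟨hne, Or.inr hlk⟩ hk.2⟩

section Imbalance

variable [Fintype α] [DecidableLT α]

noncomputable def orderImbalance (i : α) : ℝ :=
  ∑ j, ((if i < j then 1 else 0) - (if j < i then 1 else 0))

lemma sum_orderImbalance_of_isDownset [DecidableEq α] {S : Finset α} (hS : IsDownset S) :
    ∑ i ∈ S, orderImbalance i = #{p ∈ S ×ˢ Sᶜ | p.1 < p.2} := by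
  have inside : ∑ i ∈ S, ∑ j ∈ S, ((if i < j then (1 : ℝ) else 0) - (if j < i then 1 else 0))
      = 0 := by
    simp only [sum_sub_distrib]
    rw [Finset.sum_comm, sub_self]
  have outside : ∀ i ∈ S, ∀ j ∈ Sᶜ,
      ((if i < j then (1 : ℝ) else 0) - (if j < i then 1 else 0)) = if i < j then 1 else 0 := by
    intro i hi j hj
    rw [if_neg (show ¬ j < i from fun hji => mem_compl.1 hj (hS i hi j hji.le)), sub_zero]
  unfold orderImbalance
  simp_rw [← sum_add_sum_compl S]
  rw [sum_add_distrib, inside, zero_add, natCast_card_filter, sum_product]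
  exact sum_congr rfl fun i hi => sum_congr rfl (outside i hi)

lemma sum_orderImbalance_univ : ∑ i : α, orderImbalance i = 0 := by
  classical
  rw [sum_orderImbalance_of_isDownset fun _ _ j _ => mem_univ j]
  simp

lemma one_le_sum_orderImbalance (hconn : (compGraph α).Connected) {S : Finset α}
    (hS : IsDownset S) (hne : S.Nonempty) (hS_ne_univ : S ≠ univ) :
    1 ≤ ∑ i ∈ S, orderImbalance i := by
  classical
  obtain ⟨i, hi⟩ := hne
  obtain ⟨j, -, hj⟩ := exists_of_ssubset (ssubset_univ_iff.2 hS_ne_univ)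
  obtain ⟨a, ha, b, hb, hab⟩ := hS.exists_lt_of_reachable (hconn.preconnected i j) hi hj
  rw [sum_orderImbalance_of_isDownset hS, Nat.one_le_cast, one_le_card]
  exact ⟨(a, b), mem_filter.2 ⟨mem_product.2 ⟨ha, mem_compl.2 hb⟩, hab⟩⟩

end Imbalance

lemma gameCore_nonempty_of_connected [Fintype α]
    (hconn : (compGraph α).Connected) (v : Finset α → ℝ) (hv : v ∅ = 0) :
    (gameCore v).Nonempty := by
  classical
  have : Nonempty α := hconn.nonempty
  set c := v univ / Fintype.card α
  set M := ∑ S : Finset α, |v S - #S * c|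
  have hM : 0 ≤ M := sum_nonneg fun _ _ => abs_nonneg _
  have hsum : ∀ S : Finset α,
      ∑ i ∈ S, (M * orderImbalance i + c) = M * ∑ i ∈ S, orderImbalance i + #S * c := by
    intro S
    rw [sum_add_distrib, sum_const, ← mul_sum, nsmul_eq_mul]
  have hunivc : (Fintype.card α : ℝ) * c = v univ := mul_div_cancel₀ _ (by positivity)
  refine ⟨fun i => M * orderImbalance i + c, fun S hS => ?_, ?_⟩
  · rw [hsum]
    rcases S.eq_empty_or_nonempty with rfl | hne
    · simp [hv]
    rcases eq_or_ne S univ with rfl | hS_ne_univ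
    · rw [sum_orderImbalance_univ, card_univ, hunivc]
      simp
    have hvS : v S - #S * c ≤ M :=
      (le_abs_self _).trans (single_le_sum (fun T _ => abs_nonneg (v T - #T * c)) (mem_univ S))
    nlinarith [one_le_sum_orderImbalance hconn hS hne hS_ne_univ]
  · rw [hsum, sum_orderImbalance_univ, card_univ, hunivc]
    simp

lemma gameCore_eq_empty_of_isDownset_compl [Fintype α] [DecidableEq α] {A : Finset α}
    (hA : IsDownset A) (hAc : IsDownset Aᶜ) (hne : A.Nonempty) (hcne : Aᶜ.Nonempty) :
    gameCore (fun S : Finset α => if S = ∅ then (0 : ℝ) else 1) = ∅ := by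
  refine Set.eq_empty_of_forall_notMem fun x ⟨hle, htot⟩ => ?_
  have hxA := hle A hA
  have hxAc := hle Aᶜ hAc
  simp only [hne.ne_empty, hcne.ne_empty, (hne.mono (subset_univ A)).ne_empty, if_false]
    at hxA hxAc htot
  linarith [sum_add_sum_compl A x]

end Games

theorem core_nonempty_iff_poset_connected_general
    (α : Type*) [Fintype α] [PartialOrder α] [Nonempty α] :
    ((compGraph α).Connected →
      ∀ v : Finset α → ℝ, v ∅ = 0 →
        {x : α → ℝ | (∀ S : Finset α, IsDownset S → v S ≤ ∑ i ∈ S, x i) ∧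
          ∑ i, x i = v Finset.univ}.Nonempty) ∧
    (¬ (compGraph α).Connected →
      ∃ v : Finset α → ℝ, v ∅ = 0 ∧
        {x : α → ℝ | (∀ S : Finset α, IsDownset S → v S ≤ ∑ i ∈ S, x i) ∧
          ∑ i, x i = v Finset.univ} = ∅) := by
  classical
  refine ⟨gameCore_nonempty_of_connected, fun hconn => ?_⟩
  obtain ⟨i, j, hij⟩ : ∃ i j, ¬ (compGraph α).Reachable i j := by
    by_contra! h
    exact hconn ⟨h⟩
  set A := univ.filter ((compGraph α).Reachable i)
  have hA : IsDownset A := isDownset_filter_of_adj fun _ _ hab hia => hia.trans hab.reachable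
  have hAc : IsDownset Aᶜ := by
    rw [compl_filter]
    exact isDownset_filter_of_adj fun _ _ hab hia hib => hia (hib.trans hab.symm.reachable)
  refine ⟨fun S => if S = ∅ then 0 else 1, if_pos rfl,
    gameCore_eq_empty_of_isDownset_compl hA hAc ⟨i, ?_⟩ ⟨j, ?_⟩⟩ <;> simp [A, hij]

/-- If the poset `(N, ≤)` is connected then every game on `O(N)` has nonempty core;
otherwise some game on `O(N)` has empty core. -/
theorem core_nonempty_iff_poset_connected
    (α : Type*) [Fintype α] [DecidableEq α] [PartialOrder α] [Nonempty α] :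
    ((compGraph α).Connected →
      ∀ v : Finset α → ℝ, v ∅ = 0 →
        {x : α → ℝ | (∀ S : Finset α, IsDownset S → v S ≤ ∑ i ∈ S, x i) ∧
          ∑ i, x i = v Finset.univ}.Nonempty) ∧
    (¬ (compGraph α).Connected →
      ∃ v : Finset α → ℝ, v ∅ = 0 ∧
        {x : α → ℝ | (∀ S : Finset α, IsDownset S → v S ≤ ∑ i ∈ S, x i) ∧
          ∑ i, x i = v Finset.univ} = ∅) :=
  core_nonempty_iff_poset_connected_general α
end

section
/- Let F be a weakly union-closed set system containing all singletons (a partition system), and let v be a game on F with v̄ its extension to 2^N defined by v̄(S) = Σ_{T maximal in F(S)} v(T). Then core(v) = core(v̄). -/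
open Finset
open scoped Classical

/-- The extension of a game `v` on `F` to all coalitions, summing `v` over the maximal
feasible subsets. -/
noncomputable def extGame {α : Type*} [Fintype α] [DecidableEq α]
    (F : Finset (Finset α)) (v : Finset α → ℝ) (S : Finset α) : ℝ :=
  ∑ T ∈ F.filter (fun T => T ⊆ S ∧ ∀ U ∈ F, U ⊆ S → T ⊆ U → T = U), v T

/-!
The maximal feasible subsets of any coalition `S` partition it (singletons cover `S`,
and two overlapping maximal ones would have a feasible union, contradicting maximality). Hence
`x(S) = ∑ x(T) ≥ ∑ v(T) = v̄(S)` over that partition whenever `x` satisfies the core constraints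
of `v`. Conversely `v̄` agrees with `v` on `F`, so the constraints of `v̄` contain those of `v`.
-/

section MaximalSubsets

variable {α : Type*} [DecidableEq α] (F : Finset (Finset α))

noncomputable def maximalSubsets (S : Finset α) : Finset (Finset α) :=
  F.filter (fun T => T ⊆ S ∧ ∀ U ∈ F, U ⊆ S → T ⊆ U → T = U)

variable {F}

lemma mem_of_mem_maximalSubsets {S T : Finset α} (hT : T ∈ maximalSubsets F S) : T ∈ F :=
  (mem_filter.mp hT).1

lemma subset_of_mem_maximalSubsets {S T : Finset α} (hT : T ∈ maximalSubsets F S) : T ⊆ S :=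
  (mem_filter.mp hT).2.1

lemma maximalSubsets_of_mem {S : Finset α} (hS : S ∈ F) : maximalSubsets F S = {S} := by
  ext T
  simp only [maximalSubsets, mem_filter, mem_singleton]
  constructor
  · rintro ⟨-, hTS, hmax⟩
    exact hmax S hS subset_rfl hTS
  · rintro rfl
    exact ⟨hS, subset_rfl, fun U _ hUS hSU => subset_antisymm hSU hUS⟩

lemma exists_mem_maximalSubsets_of_mem (hsing : ∀ i, {i} ∈ F) {S : Finset α} {i : α}
    (hi : i ∈ S) : ∃ T ∈ maximalSubsets F S, i ∈ T := by
  have hne : (F.filter (fun T => T ⊆ S ∧ i ∈ T)).Nonempty :=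
    ⟨{i}, by simp [hsing i, hi]⟩
  obtain ⟨T, hT, hTmax⟩ := exists_max_image _ card hne
  simp only [mem_filter] at hT
  refine ⟨T, mem_filter.mpr ⟨hT.1, hT.2.1, fun U hU hUS hTU => ?_⟩, hT.2.2⟩
  exact eq_of_subset_of_card_le hTU (hTmax U (by simp [hU, hUS, hTU hT.2.2]))

lemma biUnion_maximalSubsets (hsing : ∀ i, {i} ∈ F) (S : Finset α) :
    (maximalSubsets F S).biUnion id = S := by
  ext i
  simp only [mem_biUnion, id]
  exact ⟨fun ⟨_, hT, hiT⟩ => subset_of_mem_maximalSubsets hT hiT,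
    exists_mem_maximalSubsets_of_mem hsing⟩

lemma pairwiseDisjoint_maximalSubsets
    (hwuc : ∀ A ∈ F, ∀ B ∈ F, (A ∩ B).Nonempty → A ∪ B ∈ F) (S : Finset α) :
    (maximalSubsets F S : Set (Finset α)).PairwiseDisjoint id := by
  intro A hA B hB hAB
  simp only [maximalSubsets, coe_filter, Set.mem_ofPred_eq] at hA hB
  rw [Function.onFun, id, id, disjoint_iff_inter_eq_empty, ← not_nonempty_iff_eq_empty]
  intro hne
  have hunion : A ∪ B ∈ F := hwuc A hA.1 B hB.1 hne
  have hsub : A ∪ B ⊆ S := union_subset hA.2.1 hB.2.1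
  exact hAB ((hA.2.2 _ hunion hsub subset_union_left).trans
    (hB.2.2 _ hunion hsub subset_union_right).symm)

lemma sum_sum_maximalSubsets {β : Type*} [AddCommMonoid β] (hsing : ∀ i, {i} ∈ F)
    (hwuc : ∀ A ∈ F, ∀ B ∈ F, (A ∩ B).Nonempty → A ∪ B ∈ F) (S : Finset α) (x : α → β) :
    ∑ T ∈ maximalSubsets F S, ∑ i ∈ T, x i = ∑ i ∈ S, x i := by
  conv_rhs => rw [← biUnion_maximalSubsets hsing S]
  exact (sum_biUnion (pairwiseDisjoint_maximalSubsets hwuc S)).symm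

end MaximalSubsets

section ExtGame

variable {α : Type*} [Fintype α] [DecidableEq α] {F : Finset (Finset α)} {v : Finset α → ℝ}

lemma extGame_eq_sum_maximalSubsets (S : Finset α) :
    extGame F v S = ∑ T ∈ maximalSubsets F S, v T := by
  rw [extGame, maximalSubsets]
  -- the filters differ only in their `Decidable` instances (`extGame` quantifies over the fintype)
  congr

lemma extGame_of_mem {S : Finset α} (hS : S ∈ F) : extGame F v S = v S := by
  rw [extGame_eq_sum_maximalSubsets, maximalSubsets_of_mem hS, sum_singleton]

lemma extGame_le_sum_of_forall_le (hsing : ∀ i, {i} ∈ F)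
    (hwuc : ∀ A ∈ F, ∀ B ∈ F, (A ∩ B).Nonempty → A ∪ B ∈ F) {x : α → ℝ}
    (hx : ∀ T ∈ F, v T ≤ ∑ i ∈ T, x i) (S : Finset α) :
    extGame F v S ≤ ∑ i ∈ S, x i :=
  calc extGame F v S = ∑ T ∈ maximalSubsets F S, v T := extGame_eq_sum_maximalSubsets S
    _ ≤ ∑ T ∈ maximalSubsets F S, ∑ i ∈ T, x i :=
        sum_le_sum fun T hT => hx T (mem_of_mem_maximalSubsets hT)
    _ = ∑ i ∈ S, x i := sum_sum_maximalSubsets hsing hwuc S x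

end ExtGame

theorem core_eq_core_extension_general
    {α : Type*} [Fintype α] [DecidableEq α] (F : Finset (Finset α))
    (huniv : Finset.univ ∈ F)
    (hsing : ∀ i : α, {i} ∈ F)
    (hwuc : ∀ A ∈ F, ∀ B ∈ F, (A ∩ B).Nonempty → A ∪ B ∈ F)
    (v : Finset α → ℝ) :
    {x : α → ℝ | (∀ S ∈ F, v S ≤ ∑ i ∈ S, x i) ∧ ∑ i, x i = v Finset.univ} =
    {x : α → ℝ | (∀ S : Finset α, extGame F v S ≤ ∑ i ∈ S, x i) ∧
      ∑ i, x i = extGame F v Finset.univ} := by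
  ext x
  simp only [Set.mem_ofPred_eq, extGame_of_mem huniv]
  refine and_congr_left fun _ => ⟨extGame_le_sum_of_forall_le hsing hwuc, fun h S hS => ?_⟩
  simpa only [extGame_of_mem hS] using h S

/-- For a partition system, the core of `v` equals the core of its extension `v̄`. -/
theorem core_eq_core_extension
    {α : Type*} [Fintype α] [DecidableEq α] (F : Finset (Finset α))
    (hempty : ∅ ∈ F) (huniv : Finset.univ ∈ F)
    (hsing : ∀ i : α, {i} ∈ F)
    (hwuc : ∀ A ∈ F, ∀ B ∈ F, (A ∩ B).Nonempty → A ∪ B ∈ F)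
    (v : Finset α → ℝ) (hv0 : v ∅ = 0) :
    {x : α → ℝ | (∀ S ∈ F, v S ≤ ∑ i ∈ S, x i) ∧ ∑ i, x i = v Finset.univ} =
    {x : α → ℝ | (∀ S : Finset α, extGame F v S ≤ ∑ i ∈ S, x i) ∧
      ∑ i, x i = extGame F v Finset.univ} :=
  core_eq_core_extension_general F huniv hsing hwuc v
end

section
/- Let F be weakly union-closed and v a game on F. Then the Möbius transform of the extension v̄ on 2^N vanishes outside F: m^{v̄}(S) = m^v(S) if S ∈ F, and m^{v̄}(S) = 0 otherwise. -/
open Finset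
open scoped Classical

/-- The Möbius transform on `2^N`. -/
noncomputable def mobius {α : Type*} [Fintype α] [DecidableEq α]
    (w : Finset α → ℝ) (S : Finset α) : ℝ :=
  ∑ T ∈ S.powerset, (-1 : ℝ) ^ ((S \ T).card) * w T

section BooleanMobiusInversion

variable {α : Type*} [DecidableEq α]

theorem Finset.sum_powerset_neg_one_pow_card' {M : Type*} [Ring M] (x : Finset α) :
    ∑ t ∈ x.powerset, (-1 : M) ^ #t = if x = ∅ then 1 else 0 := by
  have h := congrArg (Int.cast : ℤ → M) (sum_powerset_neg_one_pow_card (x := x))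
  push_cast at h
  rw [h]

theorem Finset.sum_Icc_neg_one_pow_card_sdiff {M : Type*} [Ring M] {U S : Finset α}
    (hUS : U ⊆ S) : ∑ T ∈ Icc U S, (-1 : M) ^ #(S \ T) = if U = S then 1 else 0 := by
  have hcompl : ∑ T ∈ Icc U S, (-1 : M) ^ #(S \ T) = ∑ W ∈ (S \ U).powerset, (-1 : M) ^ #W := by
    refine sum_nbij' (S \ ·) (S \ ·) ?_ ?_ ?_ ?_ fun _ _ => rfl
    · intro T hT
      exact mem_powerset.2 (sdiff_subset_sdiff le_rfl (mem_Icc.1 hT).1)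
    · intro W hW
      exact mem_Icc.2 ⟨subset_sdiff.2 ⟨hUS, disjoint_of_subset_right (mem_powerset.1 hW)
        disjoint_sdiff⟩, sdiff_subset⟩
    · intro T hT
      exact sdiff_sdiff_eq_self (mem_Icc.1 hT).2
    · intro W hW
      exact sdiff_sdiff_eq_self ((mem_powerset.1 hW).trans sdiff_subset)
  rw [hcompl, sum_powerset_neg_one_pow_card']
  exact if_congr (sdiff_eq_empty_iff_subset.trans ⟨hUS.antisymm, fun h => h ▸ subset_refl U⟩)
    rfl rfl

variable [Fintype α]

theorem mobius_sum_powerset (f : Finset α → ℝ) (S : Finset α) :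
    mobius (fun X => ∑ T ∈ X.powerset, f T) S = f S := by
  unfold mobius
  calc ∑ T ∈ S.powerset, (-1 : ℝ) ^ #(S \ T) * ∑ U ∈ T.powerset, f U
      = ∑ U ∈ S.powerset, ∑ T ∈ Icc U S, (-1 : ℝ) ^ #(S \ T) * f U := by
        simp_rw [mul_sum]
        refine sum_comm' fun T U => ?_
        simp only [mem_powerset, mem_Icc]
        exact ⟨fun h => ⟨⟨h.2, h.1⟩, h.2.trans h.1⟩, fun h => ⟨h.1.2, h.1.1⟩⟩
    _ = ∑ U ∈ S.powerset, if U = S then f U else 0 := by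
        refine sum_congr rfl fun U hU => ?_
        rw [← sum_mul, sum_Icc_neg_one_pow_card_sdiff (mem_powerset.1 hU), ite_mul, one_mul,
          zero_mul]
    _ = f S := by simp

end BooleanMobiusInversion

section MaximalFeasibleSets

variable {α : Type*} [DecidableEq α]

def WeaklyUnionClosed (F : Finset (Finset α)) : Prop :=
  ∀ A ∈ F, ∀ B ∈ F, (A ∩ B).Nonempty → A ∪ B ∈ F

def maxFeasible (F : Finset (Finset α)) (S : Finset α) : Finset (Finset α) :=
  F.filter (fun T => T ⊆ S ∧ ∀ U ∈ F, U ⊆ S → T ⊆ U → T = U)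

theorem mem_maxFeasible {F : Finset (Finset α)} {S T : Finset α} :
    T ∈ maxFeasible F S ↔ T ∈ F ∧ T ⊆ S ∧ ∀ U ∈ F, U ⊆ S → T ⊆ U → T = U :=
  mem_filter

theorem exists_mem_maxFeasible_superset {F : Finset (Finset α)} {S U : Finset α} (hU : U ∈ F)
    (hUS : U ⊆ S) : ∃ T ∈ maxFeasible F S, U ⊆ T := by
  obtain ⟨T, hUT, hT⟩ := (F.filter (· ⊆ S)).exists_le_maximal (mem_filter.2 ⟨hU, hUS⟩)
  obtain ⟨hTF, hTS⟩ := mem_filter.1 hT.prop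
  refine ⟨T, mem_maxFeasible.2 ⟨hTF, hTS, fun W hWF hWS hTW => ?_⟩, hUT⟩
  exact hTW.antisymm (hT.le_of_ge (mem_filter.2 ⟨hWF, hWS⟩) hTW)

namespace WeaklyUnionClosed

variable {F : Finset (Finset α)}

theorem eq_of_mem_maxFeasible (hF : WeaklyUnionClosed F) {S T₁ T₂ : Finset α}
    (h₁ : T₁ ∈ maxFeasible F S) (h₂ : T₂ ∈ maxFeasible F S) (hmeet : (T₁ ∩ T₂).Nonempty) :
    T₁ = T₂ := by
  obtain ⟨hF₁, hS₁, hmax₁⟩ := mem_maxFeasible.1 h₁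
  obtain ⟨hF₂, hS₂, hmax₂⟩ := mem_maxFeasible.1 h₂
  have hunion : T₁ ∪ T₂ ∈ F := hF T₁ hF₁ T₂ hF₂ hmeet
  have hunionS : T₁ ∪ T₂ ⊆ S := union_subset hS₁ hS₂
  exact (hmax₁ _ hunion hunionS subset_union_left).trans
    (hmax₂ _ hunion hunionS subset_union_right).symm

theorem sum_filter_subset_eq_sum_maxFeasible (hF : WeaklyUnionClosed F) {M : Type*}
    [AddCommMonoid M] {g : Finset α → M} (hg : g ∅ = 0) (S : Finset α) :
    ∑ U ∈ F with U ⊆ S, g U = ∑ T ∈ maxFeasible F S, ∑ U ∈ F with U ⊆ T, g U := by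
  have drop_empty : ∀ X, ∑ U ∈ F with U ⊆ X, g U = ∑ U ∈ F with U ⊆ X ∧ U.Nonempty, g U := by
    intro X
    rw [← filter_filter]
    exact (sum_filter_of_ne fun U _ hU => nonempty_iff_ne_empty.2 fun h => hU (h ▸ hg)).symm
  have hdisj : (maxFeasible F S : Set (Finset α)).PairwiseDisjoint
      (fun T => F.filter (fun U => U ⊆ T ∧ U.Nonempty)) := by
    intro T₁ h₁ T₂ h₂ hne
    refine disjoint_left.2 fun U hU₁ hU₂ => hne ?_
    obtain ⟨-, hUT₁, ⟨a, ha⟩⟩ := mem_filter.1 hU₁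
    obtain ⟨-, hUT₂, -⟩ := mem_filter.1 hU₂
    exact hF.eq_of_mem_maxFeasible h₁ h₂ ⟨a, mem_inter.2 ⟨hUT₁ ha, hUT₂ ha⟩⟩
  simp_rw [drop_empty]
  rw [← sum_biUnion hdisj]
  refine sum_congr (ext fun U => ?_) fun _ _ => rfl
  simp only [mem_filter, mem_biUnion]
  constructor
  · rintro ⟨hUF, hUS, hU⟩
    obtain ⟨T, hT, hUT⟩ := exists_mem_maxFeasible_superset hUF hUS
    exact ⟨T, hT, hUF, hUT, hU⟩
  · rintro ⟨T, hT, hUF, hUT, hU⟩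
    exact ⟨hUF, hUT.trans (mem_maxFeasible.1 hT).2.1, hU⟩

end WeaklyUnionClosed

end MaximalFeasibleSets

theorem extGame_eq_sum_filter_subset {α : Type*} [Fintype α] [DecidableEq α]
    {F : Finset (Finset α)} (hF : WeaklyUnionClosed F) {v m : Finset α → ℝ}
    (hm : ∀ S ∈ F, v S = ∑ T ∈ F with T ⊆ S, m T) (hm₀ : m ∅ = 0) (S : Finset α) :
    extGame F v S = ∑ T ∈ F with T ⊆ S, m T := by
  -- not `rfl`: with `[Fintype α]` the filter in `extGame` decides `∀ U ∈ F` differently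
  have hmax : extGame F v S = ∑ T ∈ maxFeasible F S, v T := by
    unfold extGame maxFeasible
    congr 1
    ext T
    simp only [mem_filter]
  rw [hmax, hF.sum_filter_subset_eq_sum_maxFeasible hm₀]
  exact sum_congr rfl fun T hT => hm T (mem_maxFeasible.1 hT).1

theorem mobius_extension_vanishes_outside_general
    {α : Type*} [Fintype α] [DecidableEq α] (F : Finset (Finset α))
    (hempty : ∅ ∈ F)
    (hwuc : ∀ A ∈ F, ∀ B ∈ F, (A ∩ B).Nonempty → A ∪ B ∈ F)
    (v : Finset α → ℝ) (hv0 : v ∅ = 0)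
    (m : Finset α → ℝ)
    (hm : ∀ S ∈ F, v S = ∑ T ∈ F.filter (fun T => T ⊆ S), m T) :
    ∀ S : Finset α,
      (S ∈ F → mobius (extGame F v) S = m S) ∧
      (S ∉ F → mobius (extGame F v) S = 0) := by
  have hm₀ : m ∅ = 0 := by simpa [hv0, hempty, filter_eq'] using (hm ∅ hempty).symm
  have hzeta : extGame F v = fun X => ∑ T ∈ X.powerset, if T ∈ F then m T else 0 := by
    ext X
    rw [extGame_eq_sum_filter_subset hwuc hm hm₀, ← sum_filter]
    exact sum_congr (ext fun T => by simp [and_comm]) fun _ _ => rfl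
  intro S
  rw [hzeta, mobius_sum_powerset]
  exact ⟨fun h => if_pos h, fun h => if_neg h⟩

/-- The Möbius transform of the extension `v̄` coincides with that of `v` on `F` and
vanishes outside `F`. -/
theorem mobius_extension_vanishes_outside
    {α : Type*} [Fintype α] [DecidableEq α] (F : Finset (Finset α))
    (hempty : ∅ ∈ F) (huniv : Finset.univ ∈ F)
    (hwuc : ∀ A ∈ F, ∀ B ∈ F, (A ∩ B).Nonempty → A ∪ B ∈ F)
    (v : Finset α → ℝ) (hv0 : v ∅ = 0)
    (m : Finset α → ℝ)
    (hm : ∀ S ∈ F, v S = ∑ T ∈ F.filter (fun T => T ⊆ S), m T) :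
    ∀ S : Finset α,
      (S ∈ F → mobius (extGame F v) S = m S) ∧
      (S ∉ F → mobius (extGame F v) S = 0) :=
  mobius_extension_vanishes_outside_general F hempty hwuc v hv0 m hm
end

section
/- Let v be a game on 2^N. If v is convex (supermodular), then every marginal worth vector φ^σ, σ a permutation of N, belongs to core(v). Conversely, if all marginal worth vectors belong to core(v), then v is convex. -/
/-!
Write `x` for the marginal vector of `σ`. If `a` is the `σ`-last member of `insert a s`, then `s` lies
inside the set `A` of predecessors of `a`, so supermodularity gives
`v (insert a s) - v s ≤ v (insert a A) - v A = x a`; adding these increments over the members of a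
coalition `S` in `σ`-order yields `v S ≤ x(S)`, with equality when `S` is a `σ`-initial segment
(then `s = A` at every step). Conversely, given `S` and `T`, sort the players so that
`S ∩ T ⊆ S ⊆ S ∪ T` are all initial segments; then `v T ≤ x(T) = x(S ∪ T) + x(S ∩ T) - x(S)`
is the supermodular inequality.
-/

open Finset

/-- The marginal worth vector of a game `v` on `2^N` associated with a permutation. -/
noncomputable def marginalVector {n : ℕ} (v : Finset (Fin n) → ℝ)
    (σ : Equiv.Perm (Fin n)) : Fin n → ℝ :=
  fun p =>
    v (Finset.univ.filter fun q => σ.symm q ≤ σ.symm p) -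
      v (Finset.univ.filter fun q => σ.symm q < σ.symm p)

theorem sub_le_sub_insert_of_supermodular {α β : Type*} [DecidableEq α] [AddCommGroup β]
    [PartialOrder β] [IsOrderedAddMonoid β] {v : Finset α → β}
    (hv : ∀ S T, v S + v T ≤ v (S ∪ T) + v (S ∩ T)) {s t : Finset α} {a : α}
    (hst : s ⊆ t) (ha : a ∉ t) : v (insert a s) - v s ≤ v (insert a t) - v t := by
  have hunion : insert a s ∪ t = insert a t := by rw [insert_union, union_eq_right.2 hst]
  have hinter : insert a s ∩ t = s := by rw [insert_inter_of_notMem ha, inter_eq_left.2 hst]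
  rw [sub_le_sub_iff]
  simpa only [hunion, hinter] using hv (insert a s) t

section Permutation

variable {n : ℕ} (σ : Equiv.Perm (Fin n))

def predecessors (p : Fin n) : Finset (Fin n) :=
  univ.filter fun q => σ.symm q < σ.symm p

def IsInitialSegment (P : Finset (Fin n)) : Prop :=
  ∀ p ∈ P, ∀ q, σ.symm q ≤ σ.symm p → q ∈ P

theorem notMem_predecessors_self (p : Fin n) : p ∉ predecessors σ p := by
  simp [predecessors]

theorem marginalVector_apply (v : Finset (Fin n) → ℝ) (p : Fin n) :
    marginalVector v σ p = v (insert p (predecessors σ p)) - v (predecessors σ p) := by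
  unfold marginalVector predecessors
  congr 2
  ext q
  simp [le_iff_lt_or_eq, σ.symm.injective.eq_iff, or_comm]

variable {σ}

theorem subset_predecessors {s : Finset (Fin n)} {a : Fin n} (ha : a ∉ s)
    (hmax : ∀ x ∈ s, σ.symm x ≤ σ.symm a) : s ⊆ predecessors σ a := fun x hx =>
  mem_filter.2 ⟨mem_univ x, (hmax x hx).lt_of_ne fun h => ha (σ.symm.injective h ▸ hx)⟩

theorem IsInitialSegment.eq_predecessors {s : Finset (Fin n)} {a : Fin n}
    (h : IsInitialSegment σ (insert a s)) (ha : a ∉ s) (hmax : ∀ x ∈ s, σ.symm x ≤ σ.symm a) :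
    s = predecessors σ a := by
  refine (subset_predecessors ha hmax).antisymm fun q hq => ?_
  have hlt : σ.symm q < σ.symm a := (mem_filter.1 hq).2
  exact (mem_insert.1 (h a (mem_insert_self a s) q hlt.le)).resolve_left
    fun hqa => hlt.ne (congrArg σ.symm hqa)

theorem isInitialSegment_univ : IsInitialSegment σ univ := fun _ _ q _ => mem_univ q

theorem isInitialSegment_predecessors (a : Fin n) : IsInitialSegment σ (predecessors σ a) :=
  fun _ hp q hq => mem_filter.2 ⟨mem_univ q, hq.trans_lt (mem_filter.1 hp).2⟩

theorem sum_marginalVector_of_isInitialSegment {v : Finset (Fin n) → ℝ} (hv0 : v ∅ = 0)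
    {P : Finset (Fin n)} (hP : IsInitialSegment σ P) :
    ∑ i ∈ P, marginalVector v σ i = v P := by
  induction P using Finset.induction_on_max_value (fun q => σ.symm q) with
  | empty => simp [hv0]
  | insert a s ha hmax ih =>
    obtain rfl := hP.eq_predecessors ha hmax
    rw [sum_insert ha, ih (isInitialSegment_predecessors a), marginalVector_apply]
    abel

theorem le_sum_marginalVector_of_supermodular {v : Finset (Fin n) → ℝ} (hv0 : v ∅ = 0)
    (hv : ∀ S T, v S + v T ≤ v (S ∪ T) + v (S ∩ T)) (S : Finset (Fin n)) :
    v S ≤ ∑ i ∈ S, marginalVector v σ i := by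
  induction S using Finset.induction_on_max_value (fun q => σ.symm q) with
  | empty => simp [hv0]
  | insert a s ha hmax ih =>
    have hstep := sub_le_sub_insert_of_supermodular hv (subset_predecessors ha hmax)
      (notMem_predecessors_self σ a)
    rw [sum_insert ha, marginalVector_apply]
    linarith

end Permutation

theorem isInitialSegment_sort_filter_le {n : ℕ} {α : Type*} [LinearOrder α] (g : Fin n → α)
    (k : α) : IsInitialSegment (Tuple.sort g) (univ.filter fun q => g q ≤ k) := by
  intro p hp q hq
  have hgq : g q ≤ g p := by simpa using Tuple.monotone_sort g hq
  simp only [mem_filter, mem_univ, true_and] at hp ⊢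
  exact hgq.trans hp

theorem exists_perm_isInitialSegment_of_subset {n : ℕ} {A B C : Finset (Fin n)}
    (hAB : A ⊆ B) (hBC : B ⊆ C) :
    ∃ σ : Equiv.Perm (Fin n),
      IsInitialSegment σ A ∧ IsInitialSegment σ B ∧ IsInitialSegment σ C := by
  let g : Fin n → ℕ := fun q => if q ∈ A then 0 else if q ∈ B then 1 else if q ∈ C then 2 else 3
  have hlevel : ∀ (k : ℕ) (X : Finset (Fin n)), (∀ q, g q ≤ k ↔ q ∈ X) →
      IsInitialSegment (Tuple.sort g) X := fun k X hX => by
    convert isInitialSegment_sort_filter_le g k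
    ext q
    simp [hX]
  refine ⟨Tuple.sort g, hlevel 0 A fun q => ?_, hlevel 1 B fun q => ?_, hlevel 2 C fun q => ?_⟩ <;>
  · have hqAB := @hAB q
    have hqBC := @hBC q
    simp only [g]
    split_ifs <;> simp_all

/-- A game on `2^N` is convex iff all marginal worth vectors belong to its core. -/
theorem convex_iff_marginalVectors_mem_core
    {n : ℕ} (v : Finset (Fin n) → ℝ) (hv0 : v ∅ = 0) :
    (∀ S T : Finset (Fin n), v S + v T ≤ v (S ∪ T) + v (S ∩ T)) ↔
    (∀ σ : Equiv.Perm (Fin n),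
      (∀ S : Finset (Fin n), v S ≤ ∑ i ∈ S, marginalVector v σ i) ∧
      ∑ i, marginalVector v σ i = v Finset.univ) := by
  refine ⟨fun hv σ => ⟨le_sum_marginalVector_of_supermodular hv0 hv,
    sum_marginalVector_of_isInitialSegment hv0 isInitialSegment_univ⟩, fun hcore S T => ?_⟩
  obtain ⟨σ, hinter, hS, hunion⟩ :=
    exists_perm_isInitialSegment_of_subset (inter_subset_left : S ∩ T ⊆ S) subset_union_left
  have hT := (hcore σ).1 T
  have hsplit := sum_union_inter (s₁ := S) (s₂ := T) (f := marginalVector v σ)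
  rw [sum_marginalVector_of_isInitialSegment hv0 hinter,
    sum_marginalVector_of_isInitialSegment hv0 hS,
    sum_marginalVector_of_isInitialSegment hv0 hunion] at hsplit
  linarith
end

section
/- Let F be a partition system on N (containing ∅ and all singletons, weakly union-closed) with N ∈ F, and let v′ be a game on F. The partitioning game v on 2^N defined by v(S) = max over F-partitions {F_i} of S of Σ_i v′(F_i) is superadditive, and core(v) = core(v′). -/
open Finset

/-- `P` is a partition of `S` into nonempty blocks belonging to `F`. -/
def IsFPartition {α : Type*} [DecidableEq α] (F : Finset (Finset α))
    (P : Finset (Finset α)) (S : Finset α) : Prop :=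
  (∀ B ∈ P, B ∈ F ∧ B ≠ ∅) ∧ (P : Set (Finset α)).PairwiseDisjoint id ∧
    P.biUnion id = S

namespace IsFPartition

variable {α : Type*} [DecidableEq α] {F : Finset (Finset α)}
  {P Q : Finset (Finset α)} {S T : Finset α}

theorem empty : IsFPartition F ∅ ∅ :=
  ⟨by simp, by simp, by simp⟩

theorem singleton (hS : S ∈ F) (hne : S ≠ ∅) : IsFPartition F {S} S :=
  ⟨by simpa using ⟨hS, hne⟩, by simp, by simp⟩

theorem subset_of_mem (hP : IsFPartition F P S) {B : Finset α} (hB : B ∈ P) : B ⊆ S :=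
  hP.2.2 ▸ subset_biUnion_of_mem id hB

theorem disjoint_of_disjoint (hP : IsFPartition F P S) (hQ : IsFPartition F Q T)
    (hST : Disjoint S T) : Disjoint P Q := by
  refine disjoint_left.mpr fun B hBP hBQ => ?_
  obtain ⟨b, hb⟩ := nonempty_of_ne_empty (hP.1 B hBP).2
  exact disjoint_left.mp hST (hP.subset_of_mem hBP hb) (hQ.subset_of_mem hBQ hb)

theorem union (hP : IsFPartition F P S) (hQ : IsFPartition F Q T) (hST : Disjoint S T) :
    IsFPartition F (P ∪ Q) (S ∪ T) := by
  refine ⟨fun B hB => (mem_union.mp hB).elim (hP.1 B) (hQ.1 B), ?_, ?_⟩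
  · rw [coe_union, Set.pairwiseDisjoint_union]
    refine ⟨hP.2.1, hQ.2.1, fun B hB C hC _ => ?_⟩
    exact hST.mono (hP.subset_of_mem hB) (hQ.subset_of_mem hC)
  · rw [union_biUnion, hP.2.2, hQ.2.2]

theorem sum_sum_eq (hP : IsFPartition F P S) (x : α → ℝ) :
    ∑ B ∈ P, ∑ i ∈ B, x i = ∑ i ∈ S, x i := by
  rw [← hP.2.2, sum_biUnion hP.2.1]
  rfl

end IsFPartition

def IsPartitioningGame {α : Type*} [DecidableEq α] (F : Finset (Finset α))
    (v' v : Finset α → ℝ) : Prop :=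
  (∀ S P, IsFPartition F P S → ∑ B ∈ P, v' B ≤ v S) ∧
    ∀ S, ∃ P, IsFPartition F P S ∧ v S = ∑ B ∈ P, v' B

namespace IsPartitioningGame

variable {α : Type*} [DecidableEq α] {F : Finset (Finset α)} {v' v : Finset α → ℝ}

theorem superadditive (hv : IsPartitioningGame F v' v) {S T : Finset α}
    (hST : Disjoint S T) : v S + v T ≤ v (S ∪ T) := by
  obtain ⟨P, hP, hPv⟩ := hv.2 S
  obtain ⟨Q, hQ, hQv⟩ := hv.2 T
  calc v S + v T = ∑ B ∈ P ∪ Q, v' B := by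
        rw [hPv, hQv, sum_union (hP.disjoint_of_disjoint hQ hST)]
    _ ≤ v (S ∪ T) := hv.1 _ _ (hP.union hQ hST)

theorem le_of_mem (hv : IsPartitioningGame F v' v) (hv'0 : v' ∅ = 0) {S : Finset α}
    (hS : S ∈ F) : v' S ≤ v S := by
  rcases eq_or_ne S ∅ with rfl | hne
  · simpa [hv'0] using hv.1 ∅ ∅ IsFPartition.empty
  · simpa using hv.1 S {S} (IsFPartition.singleton hS hne)

theorem le_sum_of_forall_mem_le_sum (hv : IsPartitioningGame F v' v) {x : α → ℝ}
    (hx : ∀ B ∈ F, v' B ≤ ∑ i ∈ B, x i) (S : Finset α) : v S ≤ ∑ i ∈ S, x i := by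
  obtain ⟨P, hP, hPv⟩ := hv.2 S
  calc v S = ∑ B ∈ P, v' B := hPv
    _ ≤ ∑ B ∈ P, ∑ i ∈ B, x i := sum_le_sum fun B hB => hx B (hP.1 B hB).1
    _ = ∑ i ∈ S, x i := hP.sum_sum_eq x

theorem core_eq [Fintype α] (hv : IsPartitioningGame F v' v) (hv'0 : v' ∅ = 0)
    (hvN : v univ = v' univ) :
    {x : α → ℝ | (∀ S : Finset α, v S ≤ ∑ i ∈ S, x i) ∧ ∑ i, x i = v univ} =
      {x : α → ℝ | (∀ S ∈ F, v' S ≤ ∑ i ∈ S, x i) ∧ ∑ i, x i = v' univ} := by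
  ext x
  rw [Set.mem_ofPred_eq, Set.mem_ofPred_eq, hvN]
  refine and_congr_left fun _ => ⟨fun hx S hS => ?_, hv.le_sum_of_forall_mem_le_sum⟩
  exact (hv.le_of_mem hv'0 hS).trans (hx S)

end IsPartitioningGame

theorem partitioningGame_superadditive_and_core_general
    {α : Type*} [Fintype α] [DecidableEq α] (F : Finset (Finset α))
    (v' : Finset α → ℝ) (hv'0 : v' ∅ = 0)
    (v : Finset α → ℝ)
    (hub : ∀ S : Finset α, ∀ P : Finset (Finset α),
      IsFPartition F P S → ∑ B ∈ P, v' B ≤ v S)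
    (hach : ∀ S : Finset α, ∃ P : Finset (Finset α),
      IsFPartition F P S ∧ v S = ∑ B ∈ P, v' B)
    (hvN : v Finset.univ = v' Finset.univ) :
    (∀ S T : Finset α, Disjoint S T → v S + v T ≤ v (S ∪ T)) ∧
    {x : α → ℝ | (∀ S : Finset α, v S ≤ ∑ i ∈ S, x i) ∧ ∑ i, x i = v Finset.univ} =
    {x : α → ℝ | (∀ S ∈ F, v' S ≤ ∑ i ∈ S, x i) ∧ ∑ i, x i = v' Finset.univ} := by
  have hv : IsPartitioningGame F v' v := ⟨hub, hach⟩
  exact ⟨fun _ _ => hv.superadditive, hv.core_eq hv'0 hvN⟩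

/-- The partitioning game generated by `v'` on a partition system is superadditive
and has the same core as `v'`. -/
theorem partitioningGame_superadditive_and_core
    {α : Type*} [Fintype α] [DecidableEq α] (F : Finset (Finset α))
    (hempty : ∅ ∈ F) (huniv : Finset.univ ∈ F)
    (hsing : ∀ i : α, {i} ∈ F)
    (hwuc : ∀ A ∈ F, ∀ B ∈ F, (A ∩ B).Nonempty → A ∪ B ∈ F)
    (v' : Finset α → ℝ) (hv'0 : v' ∅ = 0)
    (v : Finset α → ℝ)
    (hub : ∀ S : Finset α, ∀ P : Finset (Finset α),
      IsFPartition F P S → ∑ B ∈ P, v' B ≤ v S)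
    (hach : ∀ S : Finset α, ∃ P : Finset (Finset α),
      IsFPartition F P S ∧ v S = ∑ B ∈ P, v' B)
    (hvN : v Finset.univ = v' Finset.univ) :
    (∀ S T : Finset α, Disjoint S T → v S + v T ≤ v (S ∪ T)) ∧
    {x : α → ℝ | (∀ S : Finset α, v S ≤ ∑ i ∈ S, x i) ∧ ∑ i, x i = v Finset.univ} =
    {x : α → ℝ | (∀ S ∈ F, v' S ≤ ∑ i ∈ S, x i) ∧ ∑ i, x i = v' Finset.univ} :=
  partitioningGame_superadditive_and_core_general F v' hv'0 v hub hach hvN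
end
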